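/- Let h be an irreducible factor of x^n−1 in F_{q'}[x] (F_q ⊆ F_{q'} ⊆ L), α a primitive n-th root of unity, g = (x^n−1)/h. If there are positive integers j, t with g(α^j) = α^t and gcd(j, n/gcd(q−1, n)) divides t, then there exists k ∈ {0,...,n−1} such that the F_q-cyclic code C generated by φ^{−1}_{α, x^k·g mod x^n−1} has length n and satisfies Δ(C) = d(C). -/

import Mathlib

open Polynomial

noncomputable def dftP {L : Type*} [Field L] (n : ℕ) (α : L) (f : L[X]) : L[X] :=
  ∑ j ∈ Finset.range n, C (f.eval (α ^ j)) * X ^ j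

noncomputable def idftP {L : Type*} [Field L] (n : ℕ) (α : L) (g : L[X]) : L[X] :=
  C ((n : L)⁻¹) * ∑ i ∈ Finset.range n, C (g.eval (α⁻¹ ^ i)) * X ^ i

open Classical in
noncomputable def appDist {L : Type*} [Field L] (n : ℕ) (g : L[X]) : ℕ :=
  if g = 0 then 0
  else (Finset.range n).sup fun h => n - ((X ^ h * g) %ₘ (X ^ n - 1)).natDegree

structure CyclicCode (L : Type*) [Field L] (q n : ℕ) where
  carrier : Set (Polynomial L)
  zero_mem : 0 ∈ carrier
  deg_lt : ∀ f ∈ carrier, Polynomial.natDegree f < n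
  coeff_mem : ∀ f ∈ carrier, ∀ i, (Polynomial.coeff f i) ^ q = Polynomial.coeff f i
  add_mem : ∀ f ∈ carrier, ∀ g ∈ carrier, f + g ∈ carrier
  smul_mem : ∀ a : L, a ^ q = a → ∀ f ∈ carrier, Polynomial.C a * f ∈ carrier
  shift_mem : ∀ f ∈ carrier, (Polynomial.X * f) %ₘ (Polynomial.X ^ n - 1) ∈ carrier

noncomputable def minDist {L : Type*} [Field L] {q n : ℕ} (C : CyclicCode L q n) : ℕ :=
  sInf { w | ∃ c ∈ C.carrier, c ≠ 0 ∧ w = c.support.card }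

open Classical in
noncomputable def appDistAt {L : Type*} [Field L] {q n : ℕ} (α : L) (C : CyclicCode L q n) : ℕ :=
  sInf { d | ∃ c ∈ C.carrier, c ≠ 0 ∧ d = appDist n (dftP n α c) }

open Classical in
noncomputable def appDistCode {L : Type*} [Field L] {q n : ℕ} (C : CyclicCode L q n) : ℕ :=
  sSup { d | ∃ α : L, IsPrimitiveRoot α n ∧ d = appDistAt α C }

def IsOptimalRoot {L : Type*} [Field L] {q n : ℕ} (α : L) (C : CyclicCode L q n) : Prop :=
  IsPrimitiveRoot α n ∧ appDistAt α C = appDistCode C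

def IsGenBy {L : Type*} [Field L] {q n : ℕ} (v : Polynomial L) (C : CyclicCode L q n) : Prop :=
  v ∈ C.carrier ∧ ∀ C' : CyclicCode L q n, v ∈ C'.carrier → C.carrier ⊆ C'.carrier

def IsIdemGen {L : Type*} [Field L] {q n : ℕ} (e : Polynomial L) (C : CyclicCode L q n) : Prop :=
  e ∈ C.carrier ∧ (e * e) %ₘ (X ^ n - 1) = e ∧ ∀ c ∈ C.carrier, (e * c) %ₘ (X ^ n - 1) = c

def IsGenPoly {L : Type*} [Field L] {q n : ℕ} (g : Polynomial L) (C : CyclicCode L q n) : Prop :=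
  g ∈ C.carrier ∧ g.Monic ∧ g ∣ (X ^ n - 1) ∧ (∀ c ∈ C.carrier, g ∣ c) ∧
    ∀ f : L[X], f.natDegree < n → (∀ i, f.coeff i ^ q = f.coeff i) → g ∣ f → f ∈ C.carrier

noncomputable def polyGcd {L : Type*} [Field L] (a b : L[X]) : L[X] :=
  letI := Classical.decEq L[X]
  EuclideanDomain.gcd a b

/-!
Choose `k` with `n / gcd (q - 1, n) ∣ j k + t`, so that `x = α ^ (j k + t) = (α ^ j) ^ k g(α ^ j)`
lies in `𝔽_q`. Since `g` has coefficients in `𝔽_{q'}` and the roots of `h` form the Frobenius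
orbit of `α ^ j`, every root `β` of `h` satisfies `β ^ k g(β) = x`, while `g` vanishes at the
other `n`-th roots of unity. Hence `e = φ⁻¹(X ^ k g mod (X ^ n - 1))` has its coefficients in
`{0, x / n} ⊆ 𝔽_q` and weight `deg h`.

Every codeword `c` of the code generated by `e` vanishes at each `α ^ i` where `X ^ k g mod
(X ^ n - 1)` has a zero coefficient, so the transform of `c`, shifted by `X ^ (n - k)`, has degree
at most `deg g`: the apparent distance of `c` is at least `n - deg g = deg h`. The BCH bound
(apparent distance ≤ weight, by a Vandermonde argument), applied to `e` at every primitive root,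
gives the reverse inequalities, so `Δ(C) = d(C) = deg h`.
-/

open Finset

theorem Nat.exists_lt_add_mod_eq {n i : ℕ} (hi : i < n) (h : ℕ) :
    ∃ j < n, (h + j) % n = i := by
  refine ⟨(i + (n - h % n)) % n, Nat.mod_lt _ (by omega), ?_⟩
  have hmod := Nat.mod_add_div h n
  have hlt := Nat.mod_lt h (show 0 < n by omega)
  have : h + (i + (n - h % n)) = i + n * (h / n + 1) := by rw [mul_add, mul_one]; omega
  rw [Nat.add_mod_mod, this, Nat.add_mul_mod_self_left, Nat.mod_eq_of_lt hi]

theorem Nat.exists_lt_dvd_mul_add {j t m : ℕ} (hm : 0 < m) (h : Nat.gcd j m ∣ t) :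
    ∃ k < m, m ∣ j * k + t := by
  have : NeZero m := ⟨hm.ne'⟩
  obtain ⟨c, rfl⟩ := h
  refine ⟨(-(Nat.gcdA j m * c : ZMod m)).val, ZMod.val_lt _, ?_⟩
  have hbezout := congrArg (Int.cast : ℤ → ZMod m) (Nat.gcd_eq_gcd_ab j m)
  push_cast [ZMod.natCast_self] at hbezout
  rw [← ZMod.natCast_eq_zero_iff]
  push_cast [ZMod.natCast_val, ZMod.cast_id', id, hbezout]
  ring

theorem pow_pow_eq_self {M : Type*} [Monoid M] {x : M} {Q : ℕ} (hx : x ^ Q = x) (l : ℕ) :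
    x ^ Q ^ l = x := by
  have h := Function.IsFixedPt.iterate (f := (· ^ Q)) hx l
  rwa [pow_iterate] at h

theorem pow_pow_eq_self_of_div_gcd_dvd {M : Type*} [Monoid M] {α : M} {n q N : ℕ}
    (hα : α ^ n = 1) (hq : 0 < q) (h : n / Nat.gcd (q - 1) n ∣ N) : (α ^ N) ^ q = α ^ N := by
  obtain ⟨c, hc⟩ : n ∣ N * (q - 1) :=
    Nat.div_mul_cancel (Nat.gcd_dvd_right _ n) ▸ Nat.mul_dvd_mul h (Nat.gcd_dvd_left _ _)
  conv_lhs =>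
    rw [← Nat.sub_add_cancel hq, pow_succ, ← pow_mul, hc, pow_mul, hα, one_pow, one_mul]

theorem natCast_ne_zero_of_coprime_pow {L : Type*} [Field L] {p s n : ℕ} [CharP L p]
    (hp : p.Prime) (hs : s ≠ 0) (hcop : n.Coprime (p ^ s)) : (n : L) ≠ 0 := fun h0 =>
  (hp.coprime_iff_not_dvd.1 (hcop.coprime_dvd_right (dvd_pow_self p hs)).symm)
    ((CharP.cast_eq_zero_iff L p n).1 h0)

theorem Finset.eq_zero_of_sum_mul_pow_eq_zero {R ι : Type*} [CommRing R] [IsDomain R]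
    {s : Finset ι} {f v : ι → R} (hf : Set.InjOn f s)
    (h : ∀ r < #s, ∑ i ∈ s, v i * f i ^ r = 0) : ∀ i ∈ s, v i = 0 := by
  let e := s.equivFin
  have hv : (fun k => v (e.symm k)) = 0 := by
    refine Matrix.eq_zero_of_forall_pow_sum_mul_pow_eq_zero (f := fun k => f (e.symm k))
      (fun k k' hkk' => e.symm.injective (Subtype.ext (hf (e.symm k).2 (e.symm k').2 hkk')))
      fun r => ?_
    rw [e.symm.sum_comp (fun x : s => v x * f x ^ (r : ℕ)),
      sum_coe_sort s fun x => v x * f x ^ (r : ℕ)]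
    exact h r r.2
  intro i hi
  simpa using congrFun hv (e ⟨i, hi⟩)

namespace Polynomial

variable {R : Type*} [CommRing R] {n : ℕ}

theorem monic_X_pow_sub_one (hn : n ≠ 0) : (X ^ n - 1 : R[X]).Monic := by
  simpa using monic_X_pow_sub_C (1 : R) hn

theorem X_pow_mod_mul_modByMonic (h : ℕ) (G : R[X]) :
    (X ^ (h % n) * G) %ₘ (X ^ n - 1) = (X ^ h * G) %ₘ (X ^ n - 1) := by
  rcases Nat.eq_zero_or_pos n with rfl | hn
  · simp
  refine (modByMonic_eq_of_dvd_sub (monic_X_pow_sub_one hn.ne') ?_).symm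
  have : X ^ h * G - X ^ (h % n) * G = X ^ (h % n) * G * (X ^ (n * (h / n)) - 1) := by
    rw [mul_sub, mul_one, mul_right_comm, ← pow_add, Nat.mod_add_div]
  rw [this]
  exact dvd_mul_of_dvd_right (pow_one_sub_dvd_pow_mul_sub_one X n _) _

theorem X_pow_mul_modByMonic_modByMonic (a : ℕ) (G : R[X]) {M : R[X]} (hM : M.Monic) :
    (X ^ a * (G %ₘ M)) %ₘ M = (X ^ a * G) %ₘ M := by
  refine modByMonic_eq_of_dvd_sub hM ⟨-(X ^ a * (G /ₘ M)), ?_⟩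
  linear_combination X ^ a * modByMonic_add_div G M

theorem eval_modByMonic_X_pow_sub_one {β : R} (hβ : β ^ n = 1) (P : R[X]) :
    (P %ₘ (X ^ n - 1)).eval β = P.eval β := by
  rw [modByMonic_eq_sub_mul_div P (X ^ n - 1)]
  simp [hβ]

theorem natDegree_sum_C_mul_X_pow_lt {ι : Type*} {s : Finset ι} (hn : n ≠ 0) (c : ι → R)
    {e : ι → ℕ} (he : ∀ i ∈ s, e i < n) : (∑ i ∈ s, C (c i) * X ^ e i).natDegree < n :=
  (natDegree_sum_le_of_forall_le s _ (n := n - 1) fun i hi =>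
    (natDegree_C_mul_X_pow_le _ _).trans (by have := he i hi; omega)).trans_lt (by omega)

variable [Nontrivial R]

theorem natDegree_X_pow_sub_one : (X ^ n - 1 : R[X]).natDegree = n := by
  simpa using natDegree_X_pow_sub_C (n := n) (r := (1 : R))

theorem natDegree_modByMonic_X_pow_sub_one_lt (hn : n ≠ 0) (P : R[X]) :
    (P %ₘ (X ^ n - 1)).natDegree < n := by
  have hM := monic_X_pow_sub_one (R := R) hn
  simpa [natDegree_X_pow_sub_one] using natDegree_modByMonic_lt P hM
    fun h1 => hn (by simpa [natDegree_X_pow_sub_one] using congrArg natDegree h1)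

theorem modByMonic_X_pow_sub_one_eq_self {G : R[X]} (hG : G.natDegree < n) :
    G %ₘ (X ^ n - 1) = G := by
  have hM := monic_X_pow_sub_one (R := R) (n := n) (by omega)
  rw [modByMonic_eq_self_iff hM, degree_eq_natDegree hM.ne_zero, natDegree_X_pow_sub_one]
  exact degree_le_natDegree.trans_lt (by exact_mod_cast hG)

theorem X_pow_mul_modByMonic_eq_sum {G : R[X]} (hG : G.natDegree < n) (h : ℕ) :
    (X ^ h * G) %ₘ (X ^ n - 1) = ∑ j ∈ range n, C (G.coeff j) * X ^ ((h + j) % n) := by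
  have hn : n ≠ 0 := by omega
  refine (modByMonic_eq_of_dvd_sub (monic_X_pow_sub_one hn) ?_).trans
    (modByMonic_X_pow_sub_one_eq_self (natDegree_sum_C_mul_X_pow_lt hn _ fun j _ =>
      Nat.mod_lt _ (by omega)))
  nth_rw 1 [G.as_sum_range_C_mul_X_pow' hG]
  rw [mul_sum, ← sum_sub_distrib]
  refine dvd_sum fun j _ => ?_
  have : X ^ h * (C (G.coeff j) * X ^ j) - C (G.coeff j) * X ^ ((h + j) % n) =
      C (G.coeff j) * X ^ ((h + j) % n) * (X ^ (n * ((h + j) / n)) - 1) := by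
    rw [mul_sub, mul_one, mul_assoc, ← pow_add, Nat.mod_add_div]; ring
  rw [this]
  exact dvd_mul_of_dvd_right (pow_one_sub_dvd_pow_mul_sub_one X n _) _

theorem coeff_X_pow_mul_modByMonic_add_mod {G : R[X]} (hG : G.natDegree < n) (h : ℕ) {j : ℕ}
    (hj : j < n) : ((X ^ h * G) %ₘ (X ^ n - 1)).coeff ((h + j) % n) = G.coeff j := by
  rw [X_pow_mul_modByMonic_eq_sum hG, finsetSum_coeff, sum_eq_single j]
  · simp
  · intro j' hj' hne
    rw [coeff_C_mul_X_pow, if_neg fun heq => hne ?_]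
    exact (Nat.ModEq.add_left_cancel' h heq.symm).eq_of_lt_of_lt (mem_range.1 hj') hj
  · exact fun hj' => absurd (mem_range.2 hj) hj'

theorem exists_coeff_X_pow_mul_modByMonic_eq {G : R[X]} (hG : G.natDegree < n) (h i : ℕ) :
    ∃ j, ((X ^ h * G) %ₘ (X ^ n - 1)).coeff i = G.coeff j := by
  rcases lt_or_ge i n with hi | hi
  · obtain ⟨j, hj, rfl⟩ := Nat.exists_lt_add_mod_eq hi h
    exact ⟨j, coeff_X_pow_mul_modByMonic_add_mod hG h hj⟩
  · refine ⟨n, ?_⟩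
    rw [coeff_eq_zero_of_natDegree_lt hG, coeff_eq_zero_of_natDegree_lt
      ((natDegree_modByMonic_X_pow_sub_one_lt (by omega) _).trans_le hi)]

theorem natDegree_X_pow_mul_modByMonic_le {P Q : R[X]} (hP : P.natDegree < n)
    (hQ : Q.natDegree < n) (hPQ : ∀ j, Q.coeff j = 0 → P.coeff j = 0) (h : ℕ) :
    ((X ^ h * P) %ₘ (X ^ n - 1)).natDegree ≤ ((X ^ h * Q) %ₘ (X ^ n - 1)).natDegree := by
  refine natDegree_le_iff_coeff_eq_zero.2 fun i hi => ?_
  have hQi := coeff_eq_zero_of_natDegree_lt hi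
  rcases lt_or_ge i n with hin | hin
  · obtain ⟨j, hj, rfl⟩ := Nat.exists_lt_add_mod_eq hin h
    rw [coeff_X_pow_mul_modByMonic_add_mod hQ h hj] at hQi
    rw [coeff_X_pow_mul_modByMonic_add_mod hP h hj, hPQ j hQi]
  · exact coeff_eq_zero_of_natDegree_lt
      ((natDegree_modByMonic_X_pow_sub_one_lt (by omega) _).trans_le hin)

theorem map_prod_X_sub_C_of_mapsTo {K : Type*} [Field K] (F : K →+* K) {s : Finset K}
    (hs : ∀ x ∈ s, F x ∈ s) : (∏ x ∈ s, (X - C x)).map F = ∏ x ∈ s, (X - C x) := by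
  classical
  have himage : s.image F = s :=
    eq_of_subset_of_card_le (image_subset_iff.2 hs) (card_image_of_injective s F.injective).ge
  simp only [Polynomial.map_prod, Polynomial.map_sub, map_X, map_C]
  conv_rhs => rw [← himage]
  rw [prod_image fun x _ y _ h => F.injective h]

end Polynomial

section Fourier

variable {L : Type*} [Field L] {n : ℕ}

theorem IsPrimitiveRoot.card_filter_range_pow_eq {α β : L} (hα : IsPrimitiveRoot α n)
    (hβ : IsPrimitiveRoot β n) (P : L → Prop) [DecidablePred P] :
    #{i ∈ range n | P (α ^ i)} = #{i ∈ range n | P (β ^ i)} := by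
  classical
  rcases n.eq_zero_or_pos with rfl | hn
  · simp
  suffices ∀ γ : L, IsPrimitiveRoot γ n →
      #{i ∈ range n | P (γ ^ i)} = #{x ∈ nthRootsFinset n (1 : L) | P x} by
    rw [this α hα, this β hβ]
  intro γ hγ
  have hinj : Set.InjOn (γ ^ ·) (range n) := fun i hi i' hi' =>
    hγ.pow_inj (mem_range.1 hi) (mem_range.1 hi')
  have himage : (range n).image (γ ^ ·) = nthRootsFinset n (1 : L) := by
    refine eq_of_subset_of_card_le (fun x hx => ?_) ?_
    · obtain ⟨i, -, rfl⟩ := mem_image.1 hx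
      rw [Polynomial.mem_nthRootsFinset hn, pow_right_comm, hγ.pow_eq_one, one_pow]
    · rw [hγ.card_nthRootsFinset, card_image_of_injOn hinj, card_range]
  rw [← himage, filter_image, card_image_of_injOn (hinj.mono (filter_subset _ _))]

theorem coeff_dftP (β : L) (c : L[X]) {j : ℕ} (hj : j < n) :
    (dftP n β c).coeff j = c.eval (β ^ j) := by
  simp [dftP, finsetSum_coeff, hj]

theorem natDegree_dftP_lt (hn : n ≠ 0) (β : L) (c : L[X]) : (dftP n β c).natDegree < n :=
  natDegree_sum_C_mul_X_pow_lt hn _ fun _ hj => mem_range.1 hj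

theorem eval_idftP {α : L} (hα : IsPrimitiveRoot α n) (hn : (n : L) ≠ 0) {r : L[X]}
    (hr : r.natDegree < n) {j : ℕ} (hj : j < n) : (idftP n α r).eval (α ^ j) = r.coeff j := by
  have hα0 : α ≠ 0 := hα.ne_zero (by rintro rfl; simp at hn)
  have horth : ∀ l < n, l ≠ j → ∑ i ∈ range n, (α ^ j / α ^ l) ^ i = 0 := by
    intro l hl hlj
    have hne : α ^ j / α ^ l ≠ 1 := fun h1 =>
      hlj (hα.pow_inj hl hj (div_eq_one_iff_eq (pow_ne_zero _ hα0) |>.1 h1).symm)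
    rw [geom_sum_eq hne, div_pow, ← pow_mul, ← pow_mul, mul_comm j, mul_comm l, pow_mul,
      pow_mul, hα.pow_eq_one, one_pow, one_pow, div_one, sub_self, zero_div]
  calc (idftP n α r).eval (α ^ j)
      = (n : L)⁻¹ * ∑ l ∈ range n, r.coeff l * ∑ i ∈ range n, (α ^ j / α ^ l) ^ i := by
        rw [idftP, eval_mul, eval_C, eval_finsetSum]
        congr 1
        simp only [eval_mul, eval_C, eval_pow, eval_X, eval_eq_sum_range' hr, sum_mul, mul_sum]
        rw [sum_comm]
        exact sum_congr rfl fun l _ => sum_congr rfl fun i _ => by ring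
    _ = r.coeff j := by
        rw [sum_eq_single j (fun l hl hlj => by rw [horth l (mem_range.1 hl) hlj, mul_zero])
          (fun hj' => absurd (mem_range.2 hj) hj'), div_self (pow_ne_zero _ hα0)]
        simp only [one_pow, sum_const, card_range, nsmul_eq_mul, mul_one]
        field_simp

theorem coeff_idftP (α : L) (r : L[X]) {i : ℕ} (hi : i < n) :
    (idftP n α r).coeff i = (n : L)⁻¹ * r.eval (α⁻¹ ^ i) := by
  rw [idftP, coeff_C_mul]
  exact congrArg _ (coeff_dftP α⁻¹ r hi)

theorem coeff_idftP_of_le (α : L) (r : L[X]) {i : ℕ} (hi : n ≤ i) :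
    (idftP n α r).coeff i = 0 := by
  simp [idftP, finsetSum_coeff, hi.not_gt]

theorem natDegree_idftP_lt (hn : n ≠ 0) (α : L) (r : L[X]) : (idftP n α r).natDegree < n :=
  (natDegree_C_mul_le _ _).trans_lt (natDegree_dftP_lt hn α⁻¹ r)

theorem lt_card_support_of_eval_mul_pow_eq_zero {β δ : L} (hβ : IsPrimitiveRoot β n)
    (hδ : δ ≠ 0) {c : L[X]} (hc : c ≠ 0) (hcn : c.natDegree < n) {w : ℕ}
    (hz : ∀ r < w, c.eval (δ * β ^ r) = 0) : w < #c.support := by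
  by_contra! hw
  have hinj : Set.InjOn (β ^ ·) c.support := fun i hi i' hi' => hβ.pow_inj
    ((supp_subset_range hcn) hi |> mem_range.1) ((supp_subset_range hcn) hi' |> mem_range.1)
  obtain ⟨i, hi⟩ := support_nonempty.2 hc
  refine mul_ne_zero (mem_support_iff.1 hi) (pow_ne_zero i hδ)
    (eq_zero_of_sum_mul_pow_eq_zero (v := fun i => c.coeff i * δ ^ i) hinj (fun r hr => ?_) i hi)
  rw [← hz r (hr.trans_le hw), eval_eq_sum, sum_def]
  exact sum_congr rfl fun i _ => by ring

theorem dftP_ne_zero {β : L} (hβ : IsPrimitiveRoot β n) {c : L[X]} (hc : c ≠ 0)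
    (hcn : c.natDegree < n) : dftP n β c ≠ 0 := by
  intro h0
  have := lt_card_support_of_eval_mul_pow_eq_zero hβ one_ne_zero hc hcn (w := n)
    fun r hr => by rw [one_mul, ← coeff_dftP β c hr, h0, coeff_zero]
  exact this.not_ge ((card_le_card (supp_subset_range hcn)).trans (card_range n).le)

theorem appDist_dftP_le_card_support {β : L} (hβ : IsPrimitiveRoot β n) {c : L[X]}
    (hc : c ≠ 0) (hcn : c.natDegree < n) : appDist n (dftP n β c) ≤ #c.support := by
  have hn : n ≠ 0 := by omega
  have hβ0 : β ≠ 0 := hβ.ne_zero hn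
  rw [appDist, if_neg (dftP_ne_zero hβ hc hcn)]
  refine Finset.sup_le fun h _ => ?_
  set D := ((X ^ h * dftP n β c) %ₘ (X ^ n - 1)).natDegree
  have hD : D < n := natDegree_modByMonic_X_pow_sub_one_lt hn _
  -- coefficients `D + 1, …, n - 1` of the shifted transform are `n - 1 - D` consecutive zeros
  -- `c (δ β ^ r)` of `c`
  suffices n - 1 - D < #c.support by omega
  refine lt_card_support_of_eval_mul_pow_eq_zero hβ (δ := β ^ (D + 1) / β ^ h)
    (div_ne_zero (pow_ne_zero _ hβ0) (pow_ne_zero _ hβ0)) hc hcn fun r hr => ?_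
  obtain ⟨j, hj, hhj⟩ := Nat.exists_lt_add_mod_eq (show D + 1 + r < n by omega) h
  have hpow : β ^ (D + 1) / β ^ h * β ^ r = β ^ j := by
    rw [div_mul_eq_mul_div, div_eq_iff (pow_ne_zero _ hβ0), ← pow_add, ← pow_add, ← hhj,
      ← pow_eq_pow_mod _ hβ.pow_eq_one, add_comm j]
  rw [hpow, ← coeff_dftP β c hj,
    ← coeff_X_pow_mul_modByMonic_add_mod (natDegree_dftP_lt hn β c) h hj, hhj]
  exact coeff_eq_zero_of_natDegree_lt (by omega)

theorem sub_natDegree_le_appDist {P : L[X]} (hP : P ≠ 0) (h : ℕ) :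
    n - ((X ^ h * P) %ₘ (X ^ n - 1)).natDegree ≤ appDist n P := by
  rcases Nat.eq_zero_or_pos n with rfl | hn
  · simp
  rw [← X_pow_mod_mul_modByMonic, appDist, if_neg hP]
  exact le_sup (f := fun h => n - ((X ^ h * P) %ₘ (X ^ n - 1)).natDegree)
    (mem_range.2 (Nat.mod_lt h hn))

end Fourier

namespace CyclicCode

variable {L : Type*} [Field L] {q n : ℕ}

/-- `C₀` only witnesses that some cyclic code contains `v`; it supplies the degree and coefficient
bounds of the intersection. -/
def closure (v : L[X]) (C₀ : CyclicCode L q n) (hv : v ∈ C₀.carrier) : CyclicCode L q n where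
  carrier := {c | ∀ C : CyclicCode L q n, v ∈ C.carrier → c ∈ C.carrier}
  zero_mem _ _ := CyclicCode.zero_mem _
  deg_lt f hf := C₀.deg_lt f (hf C₀ hv)
  coeff_mem f hf := C₀.coeff_mem f (hf C₀ hv)
  add_mem f hf g hg C hC := C.add_mem f (hf C hC) g (hg C hC)
  smul_mem a ha f hf C hC := C.smul_mem a ha f (hf C hC)
  shift_mem f hf C hC := C.shift_mem f (hf C hC)

variable {v : L[X]} {C₀ : CyclicCode L q n} {hv : v ∈ C₀.carrier}

theorem isGenBy_closure : IsGenBy v (closure v C₀ hv) :=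
  ⟨fun _ hC => hC, fun _ hC _ hc => hc _ hC⟩

theorem closure_subset : (closure v C₀ hv).carrier ⊆ C₀.carrier :=
  fun _ hc => hc C₀ hv

def ofZeros (p s : ℕ) [ExpChar L p] (hq : q = p ^ s) (hn : n ≠ 0) (Z : Set L)
    (hZ : ∀ z ∈ Z, z ^ n = 1) : CyclicCode L q n where
  carrier :=
    {c | c.natDegree < n ∧ (∀ i, c.coeff i ^ q = c.coeff i) ∧ ∀ z ∈ Z, c.eval z = 0}
  zero_mem := ⟨by simpa using Nat.pos_of_ne_zero hn,
    fun _ => by simp [hq, (expChar_pos L p).ne'], fun _ _ => eval_zero⟩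
  deg_lt _ hc := hc.1
  coeff_mem _ hc := hc.2.1
  add_mem c hc c' hc' := ⟨(natDegree_add_le c c').trans_lt (max_lt hc.1 hc'.1),
    fun i => by rw [coeff_add, hq, add_pow_expChar_pow, ← hq, hc.2.1, hc'.2.1],
    fun z hz => by rw [eval_add, hc.2.2 z hz, hc'.2.2 z hz, add_zero]⟩
  smul_mem a ha c hc := ⟨(natDegree_C_mul_le a c).trans_lt hc.1,
    fun i => by rw [coeff_C_mul, mul_pow, ha, hc.2.1],
    fun z hz => by rw [eval_mul, hc.2.2 z hz, mul_zero]⟩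
  shift_mem c hc := by
    refine ⟨natDegree_modByMonic_X_pow_sub_one_lt hn _, fun i => ?_, fun z hz => ?_⟩
    · obtain ⟨j, hj⟩ := exists_coeff_X_pow_mul_modByMonic_eq hc.1 1 i
      rw [pow_one] at hj
      rw [hj, hc.2.1]
    · rw [eval_modByMonic_X_pow_sub_one (hZ z hz), eval_mul, hc.2.2 z hz, mul_zero]

theorem appDistCode_eq_minDist {C : CyclicCode L q n} {α : L} (hα : IsPrimitiveRoot α n)
    {e : L[X]} (he : e ∈ C.carrier) (he0 : e ≠ 0)
    (hbound : ∀ c ∈ C.carrier, c ≠ 0 → #e.support ≤ appDist n (dftP n α c)) :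
    appDistCode C = minDist C := by
  have hBCH : ∀ {β : L}, IsPrimitiveRoot β n → ∀ c ∈ C.carrier, c ≠ 0 →
      appDist n (dftP n β c) ≤ #c.support :=
    fun hβ c hc hc0 => appDist_dftP_le_card_support hβ hc0 (C.deg_lt c hc)
  have hmin : minDist C = #e.support := by
    refine IsLeast.csInf_eq ⟨⟨e, he, he0, rfl⟩, ?_⟩
    rintro _ ⟨c, hc, hc0, rfl⟩
    exact (hbound c hc hc0).trans (hBCH hα c hc hc0)
  have hAt : ∀ β : L, IsPrimitiveRoot β n → appDistAt β C ≤ #e.support := fun β hβ => by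
    rw [appDistAt]
    refine (Nat.sInf_le ?_).trans (hBCH hβ e he he0)
    exact ⟨e, he, he0, rfl⟩
  have hAtα : appDistAt α C = #e.support := by
    refine (hAt α hα).antisymm ?_
    rw [appDistAt]
    refine le_csInf ⟨_, e, he, he0, rfl⟩ ?_
    rintro _ ⟨c, hc, hc0, rfl⟩
    exact hbound c hc hc0
  rw [hmin, appDistCode]
  refine IsGreatest.csSup_eq ⟨⟨α, hα, hAtα.symm⟩, ?_⟩
  rintro _ ⟨β, hβ, rfl⟩
  exact hAt β hβ

end CyclicCode

def cyclotomicCoset (q n a : ℕ) : Finset ℕ := (range n).image fun e => q ^ e * a % n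

section CyclotomicCoset

variable {q n a : ℕ}

theorem cyclotomicCoset_subset_range : cyclotomicCoset q n a ⊆ range n := by
  intro i hi
  obtain ⟨e, he, rfl⟩ := mem_image.1 hi
  exact mem_range.2 (Nat.mod_lt _ (by rw [mem_range] at he; omega))

theorem pow_mul_mod_mem_cyclotomicCoset (hq : q.Coprime n) (hn : 0 < n) (E : ℕ) :
    q ^ E * a % n ∈ cyclotomicCoset q n a := by
  have hmod : q ^ E * a ≡ q ^ (E % n.totient) * a [MOD n] := by
    conv_lhs => rw [← Nat.mod_add_div E (n.totient), pow_add, pow_mul]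
    simpa using (((Nat.ModEq.pow_totient hq).pow (E / n.totient)).mul_left
      (q ^ (E % n.totient))).mul_right a
  refine mem_image.2 ⟨E % n.totient, mem_range.2 ?_, hmod.symm⟩
  exact (Nat.mod_lt _ (Nat.totient_pos.2 hn)).trans_le (Nat.totient_le n)

theorem mul_mod_mem_cyclotomicCoset (hq : q.Coprime n) {i : ℕ}
    (hi : i ∈ cyclotomicCoset q n a) : q * i % n ∈ cyclotomicCoset q n a := by
  obtain ⟨e, he, rfl⟩ := mem_image.1 hi
  rw [Nat.mul_mod_mod, ← mul_assoc, ← pow_succ']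
  exact pow_mul_mod_mem_cyclotomicCoset hq (by rw [mem_range] at he; omega) (e + 1)

theorem exists_pow_mul_modEq_of_mem_cyclotomicCoset (hq : q.Coprime n) {i i' : ℕ}
    (hi : i ∈ cyclotomicCoset q n a) (hi' : i' ∈ cyclotomicCoset q n a) :
    ∃ l, q ^ l * i ≡ i' [MOD n] := by
  obtain ⟨e, he, rfl⟩ := mem_image.1 hi
  obtain ⟨e', -, rfl⟩ := mem_image.1 hi'
  obtain ⟨c, hc⟩ : ∃ c, n.totient = c + 1 :=
    ⟨_, (Nat.succ_pred_eq_of_pos (Nat.totient_pos.2 (by rw [mem_range] at he; omega))).symm⟩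
  refine ⟨e' + e * (n.totient - 1), ?_⟩
  calc q ^ (e' + e * (n.totient - 1)) * (q ^ e * a % n)
      ≡ q ^ (e' + e * (n.totient - 1)) * (q ^ e * a) [MOD n] := (Nat.mod_modEq _ _).mul_left _
    _ = q ^ e' * (q ^ n.totient) ^ e * a := by
        rw [hc, Nat.add_sub_cancel]
        ring
    _ ≡ q ^ e' * 1 ^ e * a [MOD n] :=
        (((Nat.ModEq.pow_totient hq).pow e).mul_left _).mul_right _
    _ ≡ q ^ e' * a % n [MOD n] := by rw [one_pow, mul_one]; exact (Nat.mod_modEq _ _).symm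

end CyclotomicCoset

section RootsOfUnity

variable {L : Type*} [Field L] {n : ℕ} {α : L} {g : L[X]} {T : Finset ℕ}

theorem eval_pow_ne_zero_iff_mem (hα : IsPrimitiveRoot α n) (hT : T ⊆ range n)
    (hg : g * ∏ i ∈ T, (X - C (α ^ i)) = X ^ n - 1) {w : ℕ} (hw : w < n) :
    g.eval (α ^ w) ≠ 0 ↔ w ∈ T := by
  have hXn : (X ^ n - 1 : L[X]) = ∏ i ∈ range n, (X - C (α ^ i)) := by
    simpa using X_pow_sub_C_eq_prod hα (by omega) (one_pow n)
  have hg' : g = ∏ i ∈ range n \ T, (X - C (α ^ i)) := by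
    refine mul_right_cancel₀ (b := ∏ i ∈ T, (X - C (α ^ i)))
      (prod_ne_zero_iff.2 fun i _ => X_sub_C_ne_zero (α ^ i)) ?_
    rw [hg, hXn, prod_sdiff hT]
  simp only [hg', eval_prod, eval_sub, eval_X, eval_C, prod_ne_zero_iff, sub_ne_zero, mem_sdiff,
    mem_range]
  exact ⟨fun h => by_contra fun hwT => h w ⟨hw, hwT⟩ rfl,
    fun hwT i ⟨hi, hiT⟩ hwi => hiT (hα.pow_inj hw hi hwi ▸ hwT)⟩

theorem natDegree_add_card_eq (hn : n ≠ 0) (hg : g * ∏ i ∈ T, (X - C (α ^ i)) = X ^ n - 1) :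
    g.natDegree + #T = n := by
  have hg0 : g ≠ 0 := by
    rintro rfl
    exact (monic_X_pow_sub_one (R := L) hn).ne_zero (by rw [← hg, zero_mul])
  rw [← natDegree_finsetProd_X_sub_C_eq_card T (α ^ ·), ← natDegree_mul hg0
    (prod_ne_zero_iff.2 fun i _ => X_sub_C_ne_zero (α ^ i)), hg, natDegree_X_pow_sub_one]

variable (p m : ℕ) [ExpChar L p]

theorem eval_pow_pow_of_map_iterateFrobenius (hg : g.map (iterateFrobenius L p m) = g) (β : L)
    (l : ℕ) : g.eval (β ^ (p ^ m) ^ l) = g.eval β ^ (p ^ m) ^ l := by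
  have hsemiconj : Function.Semiconj (g.eval ·) (· ^ p ^ m) (· ^ p ^ m) := fun x => by
    conv_lhs => rw [← hg]
    exact (eval_map _ _).trans (eval₂_hom _ x)
  simpa [pow_iterate] using hsemiconj.iterate_right l β

variable {a : ℕ}

theorem map_iterateFrobenius_eq_self (hα : IsPrimitiveRoot α n) (hcop : (p ^ m).Coprime n)
    (hg : g * ∏ i ∈ cyclotomicCoset (p ^ m) n a, (X - C (α ^ i)) = X ^ n - 1) :
    g.map (iterateFrobenius L p m) = g := by
  classical
  set F := iterateFrobenius L p m
  set R := (cyclotomicCoset (p ^ m) n a).image (α ^ ·)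
  have hh : ∏ i ∈ cyclotomicCoset (p ^ m) n a, (X - C (α ^ i)) = ∏ x ∈ R, (X - C x) :=
    (prod_image (f := fun x => X - C x) fun i hi i' hi' =>
      hα.pow_inj (mem_range.1 (cyclotomicCoset_subset_range hi))
        (mem_range.1 (cyclotomicCoset_subset_range hi'))).symm
  have hFR : ∀ x ∈ R, F x ∈ R := by
    intro x hx
    obtain ⟨i, hi, rfl⟩ := mem_image.1 hx
    refine mem_image.2 ⟨p ^ m * i % n, mul_mod_mem_cyclotomicCoset hcop hi, ?_⟩
    rw [iterateFrobenius_def, ← pow_mul, mul_comm i, ← pow_eq_pow_mod _ hα.pow_eq_one]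
  rw [hh] at hg
  refine mul_right_cancel₀ (b := ∏ x ∈ R, (X - C x))
    (prod_ne_zero_iff.2 fun x _ => X_sub_C_ne_zero x) ?_
  rw [hg, ← map_prod_X_sub_C_of_mapsTo F hFR, ← Polynomial.map_mul, hg]
  simp

theorem pow_mul_eval_eq_of_eval_ne_zero (hα : IsPrimitiveRoot α n) (hcop : (p ^ m).Coprime n)
    (hg : g * ∏ i ∈ cyclotomicCoset (p ^ m) n a, (X - C (α ^ i)) = X ^ n - 1) {γ : L}
    (hγ : γ ^ n = 1) (hγg : g.eval γ ≠ 0) (k : ℕ)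
    (hfix : (γ ^ k * g.eval γ) ^ p ^ m = γ ^ k * g.eval γ) :
    ∀ β : L, β ^ n = 1 → g.eval β ≠ 0 → β ^ k * g.eval β = γ ^ k * g.eval γ := by
  intro β hβ hβg
  have hn : n ≠ 0 := by
    rintro rfl
    simp [cyclotomicCoset] at hg
    simp [hg] at hγg
  have : NeZero n := ⟨hn⟩
  have hT := cyclotomicCoset_subset_range (q := p ^ m) (n := n) (a := a)
  obtain ⟨w, hw, rfl⟩ := hα.eq_pow_of_pow_eq_one hβ
  obtain ⟨v, hv, rfl⟩ := hα.eq_pow_of_pow_eq_one hγ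
  obtain ⟨l, hl⟩ := exists_pow_mul_modEq_of_mem_cyclotomicCoset hcop
    ((eval_pow_ne_zero_iff_mem hα hT hg hv).1 hγg)
    ((eval_pow_ne_zero_iff_mem hα hT hg hw).1 hβg)
  have hwv : α ^ w = (α ^ v) ^ (p ^ m) ^ l := by
    rw [← pow_mul, mul_comm, pow_eq_pow_mod w hα.pow_eq_one, ← hl,
      ← pow_eq_pow_mod _ hα.pow_eq_one]
  rw [hwv, eval_pow_pow_of_map_iterateFrobenius p m (map_iterateFrobenius_eq_self p m hα hcop hg),
    pow_right_comm, ← mul_pow, pow_pow_eq_self hfix]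

end RootsOfUnity

section DualCodeword

variable {L : Type*} [Field L] {n : ℕ} {α : L} {g : L[X]}

theorem coeff_idftP_X_pow_mul_modByMonic (hα : α ^ n = 1) (k : ℕ) (g : L[X]) {i : ℕ}
    (hi : i < n) : (idftP n α ((X ^ k * g) %ₘ (X ^ n - 1))).coeff i =
      (n : L)⁻¹ * ((α⁻¹ ^ i) ^ k * g.eval (α⁻¹ ^ i)) := by
  rw [coeff_idftP α _ hi, eval_modByMonic_X_pow_sub_one
    (by rw [pow_right_comm, inv_pow, hα, inv_one, one_pow]), eval_mul, eval_pow, eval_X]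

theorem coeff_idftP_pow_eq_self (p s : ℕ) [ExpChar L p] (hα : α ^ n = 1) {k : ℕ} {x : L}
    (hx : x ^ p ^ s = x)
    (hval : ∀ β : L, β ^ n = 1 → g.eval β ≠ 0 → β ^ k * g.eval β = x)
    (i : ℕ) : (idftP n α ((X ^ k * g) %ₘ (X ^ n - 1))).coeff i ^ p ^ s =
      (idftP n α ((X ^ k * g) %ₘ (X ^ n - 1))).coeff i := by
  have hq : p ^ s ≠ 0 := pow_ne_zero s (expChar_pos L p).ne'
  rcases lt_or_ge i n with hi | hi
  · have hnq : (n : L) ^ p ^ s = n := map_natCast (iterateFrobenius L p s) n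
    rw [coeff_idftP_X_pow_mul_modByMonic hα k g hi]
    by_cases hgi : g.eval (α⁻¹ ^ i) = 0
    · rw [hgi, mul_zero, mul_zero, zero_pow hq]
    · rw [hval _ (by rw [pow_right_comm, inv_pow, hα, inv_one, one_pow]) hgi, mul_pow, hx,
        inv_pow, hnq]
  · rw [coeff_idftP_of_le α _ hi, zero_pow hq]

theorem card_support_idftP (hα : IsPrimitiveRoot α n) (hnL : (n : L) ≠ 0) {T : Finset ℕ}
    (hT : T ⊆ range n) (hg : g * ∏ i ∈ T, (X - C (α ^ i)) = X ^ n - 1) (k : ℕ) :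
    #(idftP n α ((X ^ k * g) %ₘ (X ^ n - 1))).support = #T := by
  classical
  have hα0 : α ≠ 0 := hα.ne_zero (by rintro rfl; simp at hnL)
  have hsupp : (idftP n α ((X ^ k * g) %ₘ (X ^ n - 1))).support =
      {i ∈ range n | g.eval (α⁻¹ ^ i) ≠ 0} := by
    ext i
    rw [mem_support_iff, mem_filter, mem_range]
    rcases lt_or_ge i n with hi | hi
    · rw [coeff_idftP_X_pow_mul_modByMonic hα.pow_eq_one k g hi]
      simp [hi, hnL, hα0]
    · simp [coeff_idftP_of_le α _ hi, hi.not_gt]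
  rw [hsupp, hα.inv.card_filter_range_pow_eq hα (fun x => g.eval x ≠ 0)]
  congr 1
  ext w
  rw [mem_filter, mem_range]
  exact ⟨fun ⟨hw, hgw⟩ => (eval_pow_ne_zero_iff_mem hα hT hg hw).1 hgw,
    fun hw => ⟨mem_range.1 (hT hw),
      (eval_pow_ne_zero_iff_mem hα hT hg (mem_range.1 (hT hw))).2 hw⟩⟩

theorem le_appDist_dftP_of_eval_eq_zero (hα : IsPrimitiveRoot α n) (hg : g.natDegree < n)
    {k : ℕ} (hk : k ≤ n) {c : L[X]} (hc0 : c ≠ 0) (hcn : c.natDegree < n)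
    (hz : ∀ j < n, ((X ^ k * g) %ₘ (X ^ n - 1)).coeff j = 0 → c.eval (α ^ j) = 0) :
    n - g.natDegree ≤ appDist n (dftP n α c) := by
  have hn : n ≠ 0 := by omega
  have hshift : (X ^ (n - k) * ((X ^ k * g) %ₘ (X ^ n - 1))) %ₘ (X ^ n - 1) = g := by
    rw [X_pow_mul_modByMonic_modByMonic _ _ (monic_X_pow_sub_one hn), ← mul_assoc, ← pow_add,
      Nat.sub_add_cancel hk, ← X_pow_mod_mul_modByMonic, Nat.mod_self, pow_zero, one_mul,
      modByMonic_X_pow_sub_one_eq_self hg]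
  have hdeg := natDegree_X_pow_mul_modByMonic_le (Q := (X ^ k * g) %ₘ (X ^ n - 1))
    (natDegree_dftP_lt hn α c) (natDegree_modByMonic_X_pow_sub_one_lt hn _) (fun j hj => ?_)
    (n - k)
  · rw [hshift] at hdeg
    exact (Nat.sub_le_sub_left hdeg n).trans
      (sub_natDegree_le_appDist (dftP_ne_zero hα hc0 hcn) (n - k))
  rcases lt_or_ge j n with hjn | hjn
  · rw [coeff_dftP α c hjn, hz j hjn hj]
  · exact coeff_eq_zero_of_natDegree_lt ((natDegree_dftP_lt hn α c).trans_le hjn)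

theorem exists_cyclicCode_appDistCode_eq_minDist (p s : ℕ) [ExpChar L p]
    (hα : IsPrimitiveRoot α n) (hnL : (n : L) ≠ 0)
    {T : Finset ℕ} (hT : T ⊆ range n) (hTne : T.Nonempty)
    (hg : g * ∏ i ∈ T, (X - C (α ^ i)) = X ^ n - 1) {k : ℕ} (hk : k ≤ n) {x : L}
    (hx : x ^ p ^ s = x)
    (hval : ∀ β : L, β ^ n = 1 → g.eval β ≠ 0 → β ^ k * g.eval β = x) :
    ∃ Cc : CyclicCode L (p ^ s) n, IsGenBy (idftP n α ((X ^ k * g) %ₘ (X ^ n - 1))) Cc ∧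
      appDistCode Cc = minDist Cc := by
  have hn : n ≠ 0 := by rintro rfl; simp at hnL
  set r := (X ^ k * g) %ₘ (X ^ n - 1)
  let C₀ := CyclicCode.ofZeros p s rfl hn ((α ^ ·) '' {i | i < n ∧ r.coeff i = 0})
    (by rintro _ ⟨i, -, rfl⟩; rw [pow_right_comm, hα.pow_eq_one, one_pow])
  have heC₀ : idftP n α r ∈ C₀.carrier := by
    refine ⟨natDegree_idftP_lt hn α r, coeff_idftP_pow_eq_self p s hα.pow_eq_one hx hval, ?_⟩
    rintro _ ⟨i, ⟨hi, hri⟩, rfl⟩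
    rw [eval_idftP hα hnL (natDegree_modByMonic_X_pow_sub_one_lt hn _) hi, hri]
  have hwt := card_support_idftP hα hnL hT hg k
  have hdeg := natDegree_add_card_eq hn hg
  have he0 : idftP n α r ≠ 0 := fun h0 => by
    rw [h0, support_zero, card_empty] at hwt
    exact hTne.card_pos.ne hwt
  refine ⟨C₀.closure _ heC₀, CyclicCode.isGenBy_closure, CyclicCode.appDistCode_eq_minDist hα
    CyclicCode.isGenBy_closure.1 he0 fun c hc hc0 => ?_⟩
  obtain ⟨hcn, -, hcz⟩ := CyclicCode.closure_subset hc
  have hTpos := hTne.card_pos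
  rw [hwt, show #T = n - g.natDegree by omega]
  exact le_appDist_dftP_of_eval_eq_zero hα (by omega) hk hc0 hcn
    fun i hi hri => hcz _ ⟨i, ⟨hi, hri⟩, rfl⟩

end DualCodeword

theorem stmt17_general {L : Type*} [Field L] (p q s q' s' n : ℕ) (hp : p.Prime) [CharP L p]
    (hq : q = p ^ s) (hs : 0 < s) (hq' : q' = q ^ s')
    (hn : 0 < n) (hcop : Nat.Coprime n q)
    (α : L) (hα : IsPrimitiveRoot α n) (a : ℕ)
    (h g : L[X])
    (hh : h = ∏ i ∈ (Finset.range n).image (fun e => (q' ^ e * a) % n), (X - C (α ^ i)))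
    (hg : g * h = X ^ n - 1)
    (j t : ℕ)
    (heval : g.eval (α ^ j) = α ^ t)
    (hdvd : Nat.gcd j (n / Nat.gcd (q - 1) n) ∣ t) :
    ∃ k < n, ∃ Cc : CyclicCode L q n,
      IsGenBy (idftP n α ((X ^ k * g) %ₘ (X ^ n - 1))) Cc ∧
      appDistCode Cc = minDist Cc := by
  have : Fact p.Prime := ⟨hp⟩
  subst hq hq' hh
  have hT : g * ∏ i ∈ cyclotomicCoset (p ^ (s * s')) n a, (X - C (α ^ i)) = X ^ n - 1 := by
    rwa [pow_mul]
  have hcop' : (p ^ (s * s')).Coprime n := by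
    rw [pow_mul]; exact (hcop.pow_right s').symm
  obtain ⟨k, hk, hkt⟩ := Nat.exists_lt_dvd_mul_add
    (Nat.div_pos (Nat.le_of_dvd hn (Nat.gcd_dvd_right _ n)) (Nat.gcd_pos_of_pos_right _ hn)) hdvd
  have hx : ((α ^ j) ^ k * g.eval (α ^ j)) ^ p ^ s = (α ^ j) ^ k * g.eval (α ^ j) := by
    rw [heval, ← pow_mul, ← pow_add]
    exact pow_pow_eq_self_of_div_gcd_dvd hα.pow_eq_one (pow_pos hp.pos s) hkt
  have hval := pow_mul_eval_eq_of_eval_ne_zero p (s * s') hα hcop' hT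
    (by rw [pow_right_comm, hα.pow_eq_one, one_pow]) (heval ▸ pow_ne_zero t (hα.ne_zero hn.ne'))
    k (by rw [pow_mul]; exact pow_pow_eq_self hx s')
  have hkn : k < n := hk.trans_le (Nat.div_le_self _ _)
  exact ⟨k, hkn, exists_cyclicCode_appDistCode_eq_minDist p s hα
    (natCast_ne_zero_of_coprime_pow hp hs.ne' hcop) cyclotomicCoset_subset_range
    ⟨_, pow_mul_mod_mem_cyclotomicCoset hcop' hn 0⟩ hT hkn.le hx hval⟩

/-- with h the irreducible factor of x^n−1 over F_{q'} whose defining set is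
the q'-cyclotomic coset of a (so h = ∏_{i ∈ C_{q'}(a)} (x − α^i)) and g = (x^n−1)/h, if
g(α^j) = α^t with gcd(j, n/gcd(q−1,n)) ∣ t, then for some k the cyclic code generated by
φ^{-1}_{α, x^k g} satisfies Δ(C) = d(C). -/
theorem stmt17 {L : Type*} [Field L] (p q s q' s' n : ℕ) (hp : p.Prime) [CharP L p]
    (hq : q = p ^ s) (hs : 0 < s) (hq' : q' = q ^ s') (hs' : 0 < s')
    (hn : 0 < n) (hcop : Nat.Coprime n q)
    (α : L) (hα : IsPrimitiveRoot α n) (a : ℕ)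
    (h g : L[X])
    (hh : h = ∏ i ∈ (Finset.range n).image (fun e => (q' ^ e * a) % n), (X - C (α ^ i)))
    (hg : g * h = X ^ n - 1)
    (j t : ℕ) (hj : 0 < j) (ht : 0 < t)
    (heval : g.eval (α ^ j) = α ^ t)
    (hdvd : Nat.gcd j (n / Nat.gcd (q - 1) n) ∣ t) :
    ∃ k < n, ∃ Cc : CyclicCode L q n,
      IsGenBy (idftP n α ((X ^ k * g) %ₘ (X ^ n - 1))) Cc ∧
      appDistCode Cc = minDist Cc :=
  stmt17_general p q s q' s' n hp hq hs hq' hn hcop α hα a h g hh hg j t heval hdvd
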